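/- arXiv:math/9903020 — 2 statements merged into one kernel-verified Lean document; each statement's English description precedes it below -/
import Mathlib

section
/- For indeterminates X, z and all integers n, r ≥ 1: the sum over partitions μ of n of (-1)^{r-ℓ(μ)} (⟨μ, r⟩ / z_μ) X^{ℓ(μ)-1} (∑_{i≥1} m_i(μ) z^{i-1}) equals ∑_{j=1}^{r} ∑_{i=j}^{n-r+j} (-1)^{j-1} C(X, r-j) (1/i) C(i, j) C(n-i-1, r-j-1) z^{i-1}. -/
open Finset

/-- Ferrers diagram of a list of row lengths: cells `(i,j)` with `i` a row index
and `j < l[i]`. -/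
def diagram (l : List ℕ) : Finset (ℕ × ℕ) :=
  (Finset.range l.length).biUnion fun i => (Finset.range (l.getD i 0)).image fun j => (i, j)

/-- `gbc l r` = `⟨λ, r⟩`: the number of `r`-element subsets of the Ferrers diagram of `l`
containing at least one cell in every row. -/
def gbc (l : List ℕ) (r : ℕ) : ℕ :=
  (((diagram l).powersetCard r).filter
    (fun S => ∀ i ∈ Finset.range l.length, ∃ c ∈ S, c.1 = i)).card

/-- `⟨λ, r⟩` for integer `r`, zero for negative `r`. -/
def gbcZ (l : List ℕ) (r : ℤ) : ℕ := if 0 ≤ r then gbc l r.toNat else 0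

/-- `⟨μ, r⟩` for a partition `μ` of `n`. -/
def gbcP {n : ℕ} (μ : n.Partition) (r : ℕ) : ℕ :=
  gbc (μ.parts.sort (· ≥ ·)) r

/-- `z_μ = ∏_{i ≥ 1} i^{m_i(μ)} m_i(μ)!`. -/
def zMu {n : ℕ} (μ : n.Partition) : ℕ :=
  ∏ i ∈ μ.parts.toFinset, i ^ μ.parts.count i * (μ.parts.count i).factorial

/-- rising factorial `(a)_s = a(a+1)⋯(a+s-1)`. -/
def asc (a s : ℕ) : ℕ := ∏ t ∈ Finset.range s, (a + t)

/-- polynomial binomial coefficient `C(x, r) = x(x-1)⋯(x-r+1)/r!`. -/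
def cb (x : ℚ) (r : ℕ) : ℚ := (∏ t ∈ Finset.range r, (x - t)) / r.factorial

/-- `h_k(1^x) = C(x+k-1, k) = x(x+1)⋯(x+k-1)/k!` as a polynomial in `x`. -/
def hp (x : ℚ) (k : ℕ) : ℚ := (∏ t ∈ Finset.range k, (x + t)) / k.factorial

/-- integer binomial coefficient with the convention `C(a,b) = 0` unless `0 ≤ b ≤ a`. -/
def bin (a b : ℤ) : ℚ := if 0 ≤ b ∧ b ≤ a then ((a.toNat).choose b.toNat : ℚ) else 0

/-- integer binomial coefficient with the additional convention `C(-1,-1) = 1`. -/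
def binC (a b : ℤ) : ℚ := if a = -1 ∧ b = -1 then 1 else bin a b

/-- unsigned Stirling numbers of the first kind:
`x(x+1)⋯(x+n-1) = ∑_k stir n k * x^k`. -/
def stir : ℕ → ℕ → ℕ
  | 0, 0 => 1
  | 0, _ + 1 => 0
  | _ + 1, 0 => 0
  | n + 1, k + 1 => n * stir n (k + 1) + stir n k

lemma cb_zero (x : ℚ) : cb x 0 = 1 := by simp [cb]

lemma prod_shift (x : ℚ) (k : ℕ) :
    ∏ t ∈ Finset.range (k+1), (x - t) = x * ∏ t ∈ Finset.range k, (x - 1 - t) := by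
  rw [Finset.prod_range_succ', mul_comm]
  simp only [Nat.cast_zero, sub_zero]
  congr 1
  apply Finset.prod_congr rfl; intro t _; push_cast; ring

lemma cb_succ_left (x : ℚ) (k : ℕ) : (k+1 : ℚ) * cb x (k+1) = x * cb (x-1) k := by
  rw [cb, cb, prod_shift, Nat.factorial_succ]
  push_cast
  field_simp

lemma cb_pascal (x : ℚ) (k : ℕ) : cb x (k+1) = cb (x-1) (k+1) + cb (x-1) k := by
  have h2 : ∏ t ∈ Finset.range (k+1), (x - 1 - t) = (x - 1 - k) * ∏ t ∈ Finset.range k, (x - 1 - t) := by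
    rw [Finset.prod_range_succ]; ring
  rw [cb, cb, cb, prod_shift, h2, Nat.factorial_succ]
  have hf : ((k.factorial : ℚ)) ≠ 0 := by positivity
  push_cast
  field_simp
  ring

lemma cb_alt (x : ℚ) (k : ℕ) : ∑ t ∈ Finset.range (k+1), (-1:ℚ)^t * cb x t = (-1)^k * cb (x-1) k := by
  induction k with
  | zero => simp [cb]
  | succ k ih =>
    rw [Finset.sum_range_succ, ih, cb_pascal]
    ring


lemma hockey (a n : ℕ) : ∑ i ∈ Finset.range (n+1), i.choose a = (n+1).choose (a+1) := by
  induction n with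
  | zero => simp [Nat.choose]
  | succ n ih =>
    rw [Finset.sum_range_succ, ih, Nat.choose_succ_succ (n+1) a, add_comm]

lemma vandermonde (a : ℕ) : ∀ (n b : ℕ),
    ∑ i ∈ Finset.range (n+1), i.choose a * (n - i).choose b = (n+1).choose (a+b+1) := by
  intro n
  induction n with
  | zero =>
    intro b
    rcases a with _ | a <;> rcases b with _ | b <;>
      simp [Nat.choose_zero_succ, Nat.choose_eq_zero_of_lt, Nat.lt_of_sub_eq_succ] <;>
      · first
        | rfl
        | (rw [Nat.choose_eq_zero_of_lt (by omega)]; simp)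
  | succ n ih =>
    intro b
    rcases Nat.eq_zero_or_pos b with rfl | hb
    · simp only [Nat.choose_zero_right, mul_one]
      rw [hockey]
    · obtain ⟨b', rfl⟩ : ∃ b', b = b' + 1 := ⟨b - 1, by omega⟩
      have split : ∑ i ∈ Finset.range (n+2), i.choose a * (n + 1 - i).choose (b'+1)
          = (∑ i ∈ Finset.range (n+1), i.choose a * (n - i).choose (b'+1))
            + (∑ i ∈ Finset.range (n+1), i.choose a * (n - i).choose b') := by
        rw [Finset.sum_range_succ]
        rw [show (n + 1 - (n+1)) = 0 from by omega]
        rw [Nat.choose_zero_succ, mul_zero, add_zero, ← Finset.sum_add_distrib]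
        apply Finset.sum_congr rfl
        intro i hi
        simp only [Finset.mem_range] at hi
        rw [show n + 1 - i = (n - i) + 1 from by omega, Nat.choose_succ_succ, mul_add, add_comm]
      rw [split, ih, ih, show a + (b'+1) + 1 = (a+b'+1) + 1 from by ring,
        Nat.choose_succ_succ (n+1) (a+b'+1), add_comm]



lemma neg_one_pow_sub (p q : ℕ) (h : q ≤ p) : (-1:ℚ)^(p-q) = (-1)^p * (-1)^q := by
  have h1 : (-1:ℚ)^(p-q) * (-1)^q = (-1)^p := by rw [← pow_add, Nat.sub_add_cancel h]
  have h2 : (-1:ℚ)^q * (-1)^q = 1 := by rw [← pow_add, ← two_mul, pow_mul]; norm_num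
  calc (-1:ℚ)^(p-q) = (-1)^(p-q) * ((-1)^q * (-1)^q) := by rw [h2, mul_one]
    _ = ((-1)^(p-q) * (-1)^q) * (-1)^q := by ring
    _ = (-1)^p * (-1)^q := by rw [h1]

def Tf (X : ℚ) (m s : ℕ) : ℚ := cb X s * binC ((m:ℤ)-1) ((s:ℤ)-1)

lemma Tf_s_zero (X : ℚ) (m : ℕ) : Tf X m 0 = if m = 0 then 1 else 0 := by
  rcases Nat.eq_zero_or_pos m with rfl | hm
  · simp [Tf, binC, cb]
  · rw [Tf, binC, bin, if_neg (by omega), if_neg (by omega), mul_zero, if_neg (by omega)]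

lemma Tf_m_zero (X : ℚ) (s : ℕ) : Tf X 0 s = if s = 0 then 1 else 0 := by
  rcases Nat.eq_zero_or_pos s with rfl | hs
  · simp [Tf, binC, cb]
  · rw [Tf, binC, bin, if_neg (by omega), if_neg (by omega), mul_zero, if_neg (by omega)]

lemma Tf_pos (X : ℚ) (m s : ℕ) (hm : 1 ≤ m) (hs : 1 ≤ s) :
    Tf X m s = cb X s * ((m-1).choose (s-1) : ℚ) := by
  rw [Tf, binC, if_neg (by omega)]
  congr 1
  by_cases h : s ≤ m
  · rw [bin, if_pos (by omega)]
    congr 2 <;> omega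
  · rw [bin, if_neg (by omega), Nat.choose_eq_zero_of_lt (by omega), Nat.cast_zero]

lemma vand_icc (j d m' : ℕ) (hj : 1 ≤ j) :
    ∑ i ∈ Finset.Icc 1 m', i.choose j * (m'-i).choose d = (m'+1).choose (j+d+1) := by
  have h := vandermonde j m' d
  rw [Finset.range_eq_Ico, Finset.sum_eq_sum_Ico_succ_bot (by omega)] at h
  rw [Nat.choose_eq_zero_of_lt (by omega), zero_mul, zero_add] at h
  rw [← Finset.Ico_add_one_right_eq_Icc]
  exact h

lemma alt_sum (x : ℚ) (s : ℕ) (hs : 1 ≤ s) :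
    ∑ j ∈ Finset.Icc 1 s, (-1:ℚ)^(j-1) * cb x (s-j) = cb (x-1) (s-1) := by
  have step1 : ∑ j ∈ Finset.Icc 1 s, (-1:ℚ)^(j-1) * cb x (s-j)
      = ∑ t ∈ Finset.range s, (-1:ℚ)^t * cb x (s-1-t) := by
    rw [← Finset.Ico_add_one_right_eq_Icc, Finset.sum_Ico_eq_sum_range]
    rw [show s + 1 - 1 = s from rfl]
    apply Finset.sum_congr rfl
    intro t ht
    rw [show 1 + t - 1 = t from by omega, show s - (1+t) = s-1-t from by omega]
  have step2 : ∑ t ∈ Finset.range s, (-1:ℚ)^t * cb x (s-1-t)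
      = ∑ u ∈ Finset.range s, (-1:ℚ)^(s-1-u) * cb x u := by
    rw [← Finset.sum_range_reflect (fun u => (-1:ℚ)^(s-1-u) * cb x u) s]
    apply Finset.sum_congr rfl
    intro t ht
    simp only [Finset.mem_range] at ht
    rw [show s - 1 - (s-1-t) = t from by omega]
  have step3 : ∑ u ∈ Finset.range s, (-1:ℚ)^(s-1-u) * cb x u
      = (-1:ℚ)^(s-1) * ∑ u ∈ Finset.range s, (-1:ℚ)^u * cb x u := by
    rw [Finset.mul_sum]
    apply Finset.sum_congr rfl
    intro u hu
    simp only [Finset.mem_range] at hu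
    rw [neg_one_pow_sub (s-1) u (by omega)]
    ring
  rw [step1, step2, step3, show s = (s-1)+1 from by omega, show s-1+1-1 = s-1 from by omega,
    cb_alt, ← mul_assoc, ← pow_add, ← two_mul, pow_mul]
  norm_num

theorem core (X : ℚ) (m s : ℕ) (hm : 1 ≤ m) :
    (m : ℚ) * Tf X m s
      = X * ∑ i ∈ Finset.Icc 1 m, ∑ j ∈ Finset.Icc 1 s,
          (-1:ℚ)^(j-1) * (i.choose j : ℚ) * Tf X (m-i) (s-j) := by
  rcases Nat.eq_zero_or_pos s with rfl | hs
  · simp [Tf_s_zero, if_neg (by omega : ¬ m = 0)]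
  rw [Finset.sum_comm]
  have inner : ∀ j ∈ Finset.Icc 1 s,
      ∑ i ∈ Finset.Icc 1 m, (-1:ℚ)^(j-1) * (i.choose j : ℚ) * Tf X (m-i) (s-j)
        = (-1:ℚ)^(j-1) * (m.choose s : ℚ) * cb X (s-j) := by
    intro j hj
    simp only [Finset.mem_Icc] at hj
    have key : ∑ i ∈ Finset.Icc 1 m, (i.choose j : ℚ) * Tf X (m-i) (s-j)
        = (m.choose s : ℚ) * cb X (s-j) := by
      rcases Nat.lt_or_ge j s with hjs | hjs
      · -- j < s
        obtain ⟨d, hd⟩ : ∃ d, s = j + d + 1 := ⟨s - j - 1, by omega⟩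
        obtain ⟨m', rfl⟩ : ∃ m', m = m' + 1 := ⟨m - 1, by omega⟩
        subst hd
        rw [Finset.sum_Icc_succ_top (by omega : 1 ≤ m'+1)]
        rw [show m' + 1 - (m'+1) = 0 from by omega, Tf_m_zero, if_neg (by omega), mul_zero, add_zero]
        have congr1 : ∀ i ∈ Finset.Icc 1 m', ((i.choose j : ℕ) : ℚ) * Tf X (m'+1-i) (j+d+1-j)
            = ((i.choose j * (m'-i).choose d : ℕ) : ℚ) * cb X (j+d+1-j) := by
          intro i hi
          simp only [Finset.mem_Icc] at hi
          rw [show j+d+1-j = d+1 from by omega,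
            Tf_pos X (m'+1-i) (d+1) (by omega) (by omega),
            show m'+1-i-1 = m'-i from by omega, show d+1-1 = d from rfl]
          push_cast; ring
        rw [Finset.sum_congr rfl congr1, ← Finset.sum_mul, ← Nat.cast_sum, vand_icc j d m' hj.1]
      · -- j = s
        have hjs' : j = s := by omega
        have congr2 : ∀ i ∈ Finset.Icc 1 m, ((i.choose j : ℕ) : ℚ) * Tf X (m-i) (s-j)
            = if i = m then (m.choose s : ℚ) else 0 := by
          intro i hi
          simp only [Finset.mem_Icc] at hi
          rw [show s - j = 0 from by omega, Tf_s_zero]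
          rcases eq_or_ne i m with rfl | hne
          · rw [if_pos (by omega), if_pos rfl, hjs', mul_one]
          · rw [if_neg (by omega), mul_zero, if_neg hne]
        rw [Finset.sum_congr rfl congr2, Finset.sum_ite_eq' _ m,
          if_pos (by simp only [Finset.mem_Icc]; omega),
          show s - j = 0 from by omega, cb_zero, mul_one]
    calc ∑ i ∈ Finset.Icc 1 m, (-1:ℚ)^(j-1) * (i.choose j : ℚ) * Tf X (m-i) (s-j)
        = (-1:ℚ)^(j-1) * ∑ i ∈ Finset.Icc 1 m, (i.choose j : ℚ) * Tf X (m-i) (s-j) := by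
          rw [Finset.mul_sum]; apply Finset.sum_congr rfl; intro i _; ring
      _ = (-1:ℚ)^(j-1) * (m.choose s : ℚ) * cb X (s-j) := by rw [key]; ring
  rw [Finset.sum_congr rfl inner]
  have factored : ∑ j ∈ Finset.Icc 1 s, (-1:ℚ)^(j-1) * (m.choose s : ℚ) * cb X (s-j)
      = (m.choose s : ℚ) * ∑ j ∈ Finset.Icc 1 s, (-1:ℚ)^(j-1) * cb X (s-j) := by
    rw [Finset.mul_sum]
    apply Finset.sum_congr rfl
    intro j _
    ring
  rw [factored, alt_sum X s hs, Tf_pos X m s hm hs]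
  have e1 : X * cb (X-1) (s-1) = (s:ℚ) * cb X s := by
    have h := cb_succ_left X (s-1)
    rw [show (s-1)+1 = s from by omega] at h
    rw [← h, Nat.cast_sub hs]
    push_cast
    ring
  have e2 : (m:ℚ) * ((m-1).choose (s-1) : ℚ) = (s:ℚ) * (m.choose s : ℚ) := by
    have h := Nat.add_one_mul_choose_eq (m-1) (s-1)
    rw [show m-1+1 = m from by omega, show s-1+1 = s from by omega] at h
    have h2 := congrArg (Nat.cast : ℕ → ℚ) h
    push_cast at h2
    rw [h2]
    ring
  calc (m:ℚ) * (cb X s * ((m-1).choose (s-1) : ℚ))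
      = ((m:ℚ) * ((m-1).choose (s-1):ℚ)) * cb X s := by ring
    _ = ((s:ℚ) * (m.choose s :ℚ)) * cb X s := by rw [e2]
    _ = (m.choose s : ℚ) * ((s:ℚ) * cb X s) := by ring
    _ = (m.choose s : ℚ) * (X * cb (X-1) (s-1)) := by rw [← e1]
    _ = X * (↑(m.choose s) * cb (X - 1) (s - 1)) := by ring


noncomputable def gcf (a : ℕ) : Polynomial ℚ := (Polynomial.X + 1)^a - 1
noncomputable def gcM (p : Multiset ℕ) : Polynomial ℚ := (p.map gcf).prod
noncomputable def gc (p : Multiset ℕ) (r : ℕ) : ℚ := (gcM p).coeff r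

lemma gcf_coeff (a j : ℕ) : (gcf a).coeff j = if j = 0 then 0 else (a.choose j : ℚ) := by
  rw [gcf, Polynomial.coeff_sub, Polynomial.coeff_X_add_one_pow, Polynomial.coeff_one]
  rcases eq_or_ne j 0 with rfl | h
  · simp
  · rw [if_neg h, if_neg (by omega), sub_zero]

lemma gc_zero (r : ℕ) : gc 0 r = if r = 0 then 1 else 0 := by
  rw [gc, gcM]
  simp [Polynomial.coeff_one, eq_comm]

lemma gc_cons (a : ℕ) (p : Multiset ℕ) (s : ℕ) :
    gc (a ::ₘ p) s = ∑ x ∈ Finset.HasAntidiagonal.antidiagonal s,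
      (if x.1 = 0 then 0 else (a.choose x.1 : ℚ)) * gc p x.2 := by
  rw [gc, gcM, Multiset.map_cons, Multiset.prod_cons, Polynomial.coeff_mul]
  apply Finset.sum_congr rfl
  intro x _
  rw [gcf_coeff, gc, gcM]

lemma gc_vanish (p : Multiset ℕ) (s : ℕ) (h : s < Multiset.card p) : gc p s = 0 := by
  have hdvd : Polynomial.X ^ (Multiset.card p) ∣ gcM p := by
    clear h
    induction p using Multiset.induction with
    | empty => simp [gcM]
    | cons a p ih =>
      rw [gcM, Multiset.map_cons, Multiset.prod_cons, Multiset.card_cons, pow_succ, mul_comm (Polynomial.X ^ _)]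
      exact mul_dvd_mul (Polynomial.X_dvd_iff.2 (by rw [gcf_coeff]; simp)) (by rw [gcM] at ih; exact ih)
  obtain ⟨c, hc⟩ := hdvd
  rw [gc, hc, Polynomial.coeff_mul]
  apply Finset.sum_eq_zero
  intro x hx
  rw [Finset.HasAntidiagonal.mem_antidiagonal] at hx
  rw [Polynomial.coeff_X_pow, if_neg (by omega), zero_mul]

def zm (p : Multiset ℕ) : ℚ := ∏ i ∈ p.toFinset, (i:ℚ)^(p.count i) * ((p.count i).factorial : ℚ)

lemma zm_ne_zero (p : Multiset ℕ) (h : ∀ a ∈ p, 0 < a) : zm p ≠ 0 := by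
  rw [zm]
  apply Finset.prod_ne_zero_iff.2
  intro i hi
  have : 0 < i := h i (Multiset.mem_toFinset.1 hi)
  positivity

lemma zm_cons (a : ℕ) (p : Multiset ℕ) :
    zm (a ::ₘ p) = (a : ℚ) * ((p.count a : ℚ) + 1) * zm p := by
  classical
  by_cases h : a ∈ p
  · have ht : (a ::ₘ p).toFinset = p.toFinset := by
      rw [Multiset.toFinset_cons, Finset.insert_eq_self.2 (Multiset.mem_toFinset.2 h)]
    have hmem : a ∈ p.toFinset := Multiset.mem_toFinset.2 h
    rw [zm, zm, ht, ← Finset.mul_prod_erase _ _ hmem, ← Finset.mul_prod_erase _ _ hmem]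
    have hcount : (a ::ₘ p).count a = p.count a + 1 := by
      rw [Multiset.count_cons_self]
    have hrest : ∀ i ∈ p.toFinset.erase a,
        (i:ℚ)^((a ::ₘ p).count i) * (((a ::ₘ p).count i).factorial : ℚ)
          = (i:ℚ)^(p.count i) * ((p.count i).factorial : ℚ) := by
      intro i hi
      rw [Multiset.count_cons_of_ne (Finset.ne_of_mem_erase hi)]
    rw [Finset.prod_congr rfl hrest, hcount]
    rw [pow_succ, Nat.factorial_succ]
    push_cast
    ring
  · have ht : (a ::ₘ p).toFinset = insert a p.toFinset := Multiset.toFinset_cons a p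
    have hna : a ∉ p.toFinset := fun hc => h (Multiset.mem_toFinset.1 hc)
    rw [zm, zm, ht, Finset.prod_insert hna]
    have hc0 : p.count a = 0 := Multiset.count_eq_zero_of_notMem h
    have hcount : (a ::ₘ p).count a = 1 := by rw [Multiset.count_cons_self, hc0]
    have hrest : ∀ i ∈ p.toFinset,
        (i:ℚ)^((a ::ₘ p).count i) * (((a ::ₘ p).count i).factorial : ℚ)
          = (i:ℚ)^(p.count i) * ((p.count i).factorial : ℚ) := by
      intro i hi
      rw [Multiset.count_cons_of_ne (fun hc => hna (by rwa [← hc]))]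
    rw [Finset.prod_congr rfl hrest, hcount, hc0]
    norm_num


lemma ms_count_sum (m : ℕ) (p : Multiset ℕ) (g : ℕ → ℚ)
    (h1 : ∀ a ∈ p, 0 < a) (h2 : ∀ a ∈ p, a ≤ m) :
    (p.map g).sum = ∑ i ∈ Finset.Icc 1 m, (p.count i : ℚ) * g i := by
  rw [Finset.sum_multiset_map_count]
  have hconv : ∀ i ∈ p.toFinset, p.count i • g i = (p.count i : ℚ) * g i :=
    fun i _ => nsmul_eq_mul _ _
  rw [Finset.sum_congr rfl hconv]
  apply Finset.sum_subset
  · intro i hi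
    have := Multiset.mem_toFinset.1 hi
    simp only [Finset.mem_Icc]
    exact ⟨h1 i this, h2 i this⟩
  · intro i _ hni
    rw [Multiset.count_eq_zero_of_notMem (fun hc => hni (Multiset.mem_toFinset.2 hc))]
    simp

def insPart {k : ℕ} (i : ℕ) (hi : 0 < i) (μ' : k.Partition) : (i+k).Partition :=
  ⟨i ::ₘ μ'.parts,
    fun {x} hx => by
      rcases Multiset.mem_cons.1 hx with rfl | hx'
      · exact hi
      · exact μ'.parts_pos hx',
    by rw [Multiset.sum_cons, μ'.parts_sum]⟩

def erasePart {i k : ℕ} (μ : (i+k).Partition) (hmem : i ∈ μ.parts) : k.Partition :=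
  ⟨μ.parts.erase i,
    fun {x} hx => μ.parts_pos (Multiset.mem_of_mem_erase hx),
    by
      have h := congrArg Multiset.sum (Multiset.cons_erase hmem)
      rw [Multiset.sum_cons, μ.parts_sum] at h
      omega⟩

lemma ins_bij (i k : ℕ) (hi : 0 < i) (f : Multiset ℕ → ℚ) :
    ∑ μ : (i+k).Partition, (μ.parts.count i : ℚ) * f μ.parts
      = ∑ μ' : k.Partition, ((μ'.parts.count i : ℚ) + 1) * f (i ::ₘ μ'.parts) := by
  classical
  rw [← Finset.sum_filter_add_sum_filter_not Finset.univ (fun μ : (i+k).Partition => i ∈ μ.parts)]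
  have h0 : ∑ μ ∈ Finset.univ.filter (fun μ : (i+k).Partition => ¬ i ∈ μ.parts),
      (μ.parts.count i : ℚ) * f μ.parts = 0 := by
    apply Finset.sum_eq_zero
    intro μ hμ
    rw [Finset.mem_filter] at hμ
    rw [Multiset.count_eq_zero_of_notMem hμ.2]
    simp
  rw [h0, add_zero]
  have key : ∀ (p : Multiset ℕ), i ∈ p →
      (p.count i : ℚ) * f p = (((p.erase i).count i : ℚ) + 1) * f (i ::ₘ p.erase i) := by
    intro p hmem
    have hc : p.count i = (p.erase i).count i + 1 := by
      conv_lhs => rw [← Multiset.cons_erase hmem]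
      rw [Multiset.count_cons_self]
    have hf : f p = f (i ::ₘ p.erase i) := by rw [Multiset.cons_erase hmem]
    rw [hc, hf]
    push_cast
    ring
  refine Finset.sum_bij'
    (fun μ hμ => erasePart μ (Finset.mem_filter.1 hμ).2)
    (fun μ' _ => insPart i hi μ') ?_ ?_ ?_ ?_ ?_
  · intro μ hμ
    exact Finset.mem_univ _
  · intro μ' _
    simp only [Finset.mem_filter, Finset.mem_univ, true_and]
    exact Multiset.mem_cons_self i _
  · intro μ hμ
    apply Nat.Partition.ext
    exact Multiset.cons_erase (Finset.mem_filter.1 hμ).2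
  · intro μ' _
    apply Nat.Partition.ext
    exact Multiset.erase_cons_head i _
  · intro μ hμ
    exact key μ.parts (Finset.mem_filter.1 hμ).2

lemma ins_count (i m : ℕ) (hi : 0 < i) (him : i ≤ m) (f : Multiset ℕ → ℚ) :
    ∑ μ : m.Partition, (μ.parts.count i : ℚ) * f μ.parts
      = ∑ μ' : (m-i).Partition, ((μ'.parts.count i : ℚ) + 1) * f (i ::ₘ μ'.parts) := by
  obtain ⟨k, rfl⟩ : ∃ k, m = i + k := ⟨m - i, by omega⟩
  rw [show i + k - i = k from by omega]
  exact ins_bij i k hi f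

lemma sum_mark (m : ℕ) (hm : 0 < m) (f : Multiset ℕ → ℚ) (g : ℕ → ℚ) :
    ∑ μ : m.Partition, f μ.parts * (μ.parts.map g).sum
      = ∑ i ∈ Finset.Icc 1 m, g i *
          ∑ μ' : (m-i).Partition, ((μ'.parts.count i : ℚ) + 1) * f (i ::ₘ μ'.parts) := by
  have step1 : ∀ μ : m.Partition,
      f μ.parts * (μ.parts.map g).sum
        = ∑ i ∈ Finset.Icc 1 m, (μ.parts.count i : ℚ) * (f μ.parts * g i) := by
    intro μ
    rw [ms_count_sum m μ.parts g (fun a ha => μ.parts_pos ha)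
      (fun a ha => μ.parts_sum ▸ Multiset.single_le_sum (fun _ _ => Nat.zero_le _) a ha)]
    rw [Finset.mul_sum]
    apply Finset.sum_congr rfl
    intro i _
    ring
  rw [Finset.sum_congr rfl (fun μ _ => step1 μ), Finset.sum_comm]
  apply Finset.sum_congr rfl
  intro i hi
  simp only [Finset.mem_Icc] at hi
  rw [ins_count i m (by omega) hi.2 (fun p => f p * g i), Finset.mul_sum]
  apply Finset.sum_congr rfl
  intro μ' _
  ring


noncomputable def trm (X : ℚ) (s : ℕ) (p : Multiset ℕ) : ℚ :=
  (-1:ℚ)^(s + Multiset.card p) * gc p s * X ^ (Multiset.card p) / zm p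

noncomputable def Bp (X : ℚ) (m s : ℕ) : ℚ := ∑ μ : m.Partition, trm X s μ.parts

lemma Bp_zero (X : ℚ) (s : ℕ) : Bp X 0 s = if s = 0 then 1 else 0 := by
  rw [Bp, Fintype.sum_unique]
  rw [Nat.Partition.partition_zero_parts]
  rw [trm, gc_zero, zm]
  rcases eq_or_ne s 0 with rfl | h
  · simp
  · simp [h]

lemma anti_to_icc (s : ℕ) (G : ℕ → ℕ → ℚ) (h0 : ∀ k, G 0 k = 0) :
    ∑ x ∈ Finset.HasAntidiagonal.antidiagonal s, G x.1 x.2 = ∑ j ∈ Finset.Icc 1 s, G j (s-j) := by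
  rw [Finset.Nat.sum_antidiagonal_eq_sum_range_succ_mk]
  rcases Nat.eq_zero_or_pos s with rfl | hs
  · simp [h0]
  rw [Finset.range_eq_Ico, Finset.sum_eq_sum_Ico_succ_bot (by omega), h0, zero_add,
    ← Finset.Ico_add_one_right_eq_Icc]
  rfl

lemma sgn2 (s l j : ℕ) (h1 : 1 ≤ j) (h2 : j ≤ s) :
    (-1:ℚ)^(s+l+1) = (-1)^(j-1) * (-1)^(s-j+l) := by
  rw [show s-j+l = (s+l)-j from by omega, neg_one_pow_sub (s+l) j (by omega)]
  have hodd : (-1:ℚ)^(j-1) * (-1)^j = -1 := by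
    rw [show j = (j-1)+1 from by omega, pow_succ, show (j-1)+1-1 = j-1 from by omega,
      ← mul_assoc, ← pow_add, ← two_mul, pow_mul]
    norm_num
  calc (-1:ℚ)^(s+l+1) = -(-1:ℚ)^(s+l) := by rw [pow_succ]; ring
    _ = ((-1:ℚ)^(j-1) * (-1)^j) * (-1)^(s+l) := by rw [hodd]; ring
    _ = (-1)^(j-1) * ((-1)^(s+l) * (-1)^j) := by ring

lemma gc_cons_icc (i : ℕ) (p : Multiset ℕ) (s : ℕ) :
    gc (i ::ₘ p) s = ∑ j ∈ Finset.Icc 1 s, (i.choose j : ℚ) * gc p (s-j) := by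
  rw [gc_cons]
  rw [anti_to_icc s (fun j k => (if j = 0 then 0 else (i.choose j : ℚ)) * gc p k)
    (fun k => by simp)]
  apply Finset.sum_congr rfl
  intro j hj
  simp only [Finset.mem_Icc] at hj
  rw [if_neg (by omega)]

lemma per_ins (X : ℚ) (s i : ℕ) (hi : 1 ≤ i) (p : Multiset ℕ) (hp : ∀ a ∈ p, 0 < a) :
    ((p.count i : ℚ) + 1) * trm X s (i ::ₘ p)
      = (X / i) * ∑ j ∈ Finset.Icc 1 s, (-1:ℚ)^(j-1) * (i.choose j : ℚ) * trm X (s-j) p := by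
  have hz : zm p ≠ 0 := zm_ne_zero p hp
  have hiq : (i:ℚ) ≠ 0 := by positivity
  have hc1 : ((p.count i : ℚ) + 1) ≠ 0 := by positivity
  have hR : (X / i) * ∑ j ∈ Finset.Icc 1 s, (-1:ℚ)^(j-1) * (i.choose j : ℚ) * trm X (s-j) p
      = ((-1:ℚ)^(s + Multiset.card p + 1) * X^(Multiset.card p + 1) / ((i:ℚ) * zm p))
          * ∑ j ∈ Finset.Icc 1 s, (i.choose j : ℚ) * gc p (s-j) := by
    rw [Finset.mul_sum, Finset.mul_sum]
    apply Finset.sum_congr rfl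
    intro j hj
    simp only [Finset.mem_Icc] at hj
    rw [trm, sgn2 s (Multiset.card p) j hj.1 hj.2]
    field_simp
    ring
  rw [hR, trm, Multiset.card_cons, zm_cons, gc_cons_icc]
  rw [show s + (Multiset.card p + 1) = s + Multiset.card p + 1 from by omega]
  generalize (∑ j ∈ Finset.Icc 1 s, (i.choose j : ℚ) * gc p (s-j)) = S
  field_simp

def ncast : ℕ → ℚ := fun a => (a : ℚ)

lemma multiset_sum_cast (p : Multiset ℕ) : (p.map ncast).sum = (p.sum : ℚ) := by
  induction p using Multiset.induction with
  | empty => simp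
  | cons a p ih => simp [ncast, ih]

lemma Bp_step (X : ℚ) (m s : ℕ) (hm : 1 ≤ m) :
    (m:ℚ) * Bp X m s
      = X * ∑ i ∈ Finset.Icc 1 m, ∑ j ∈ Finset.Icc 1 s,
          (-1:ℚ)^(j-1) * (i.choose j : ℚ) * Bp X (m-i) (s-j) := by
  have l1 : (m:ℚ) * Bp X m s
      = ∑ μ : m.Partition, trm X s μ.parts * ((μ.parts.map ncast).sum) := by
    rw [Bp, Finset.mul_sum]
    apply Finset.sum_congr rfl
    intro μ _
    have : ((μ.parts.map ncast).sum) = (m:ℚ) := by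
      rw [multiset_sum_cast, μ.parts_sum]
    rw [this]
    ring
  rw [l1, sum_mark m hm (trm X s) ncast]
  rw [Finset.mul_sum]
  apply Finset.sum_congr rfl
  intro i hi
  simp only [Finset.mem_Icc] at hi
  have inner : ∑ μ' : (m-i).Partition, ((μ'.parts.count i : ℚ) + 1) * trm X s (i ::ₘ μ'.parts)
      = ∑ μ' : (m-i).Partition, (X / i) *
          ∑ j ∈ Finset.Icc 1 s, (-1:ℚ)^(j-1) * (i.choose j : ℚ) * trm X (s-j) μ'.parts := by
    apply Finset.sum_congr rfl
    intro μ' _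
    exact per_ins X s i hi.1 μ'.parts (fun a ha => μ'.parts_pos ha)
  rw [inner, ← Finset.mul_sum, Finset.sum_comm]
  have hiq : (i:ℚ) ≠ 0 := by
    have h1 := hi.1
    simp only [ne_eq, Nat.cast_eq_zero]
    omega
  have swap : ∑ j ∈ Finset.Icc 1 s, ∑ μ' : (m-i).Partition,
      (-1:ℚ)^(j-1) * (i.choose j : ℚ) * trm X (s-j) μ'.parts
      = ∑ j ∈ Finset.Icc 1 s, (-1:ℚ)^(j-1) * (i.choose j : ℚ) * Bp X (m-i) (s-j) := by
    apply Finset.sum_congr rfl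
    intro j _
    rw [Bp, Finset.mul_sum]
  rw [swap]
  have hnc : ncast i = (i:ℚ) := rfl
  rw [hnc]
  generalize (∑ j ∈ Finset.Icc 1 s, (-1:ℚ)^(j-1) * (i.choose j : ℚ) * Bp X (m-i) (s-j)) = S
  calc (i:ℚ) * (X / i * S) = (X * S) * ((i:ℚ)/(i:ℚ)) := by ring
    _ = X * S := by rw [div_self hiq, mul_one]

lemma Bp_eq_Tf (X : ℚ) : ∀ m s, Bp X m s = Tf X m s := by
  intro m
  induction m using Nat.strong_induction_on with
  | _ m ih =>
    intro s
    rcases Nat.eq_zero_or_pos m with rfl | hm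
    · rw [Bp_zero, Tf_m_zero]
    have hmq : (m:ℚ) ≠ 0 := Nat.cast_ne_zero.2 (by omega)
    apply mul_left_cancel₀ hmq
    rw [Bp_step X m s hm, core X m s hm]
    refine congrArg (fun t => X * t) ?_
    apply Finset.sum_congr rfl
    intro i hi
    simp only [Finset.mem_Icc] at hi
    apply Finset.sum_congr rfl
    intro j _
    rw [ih (m-i) (by omega)]

lemma gbc_nil (r : ℕ) : gbc [] r = if r = 0 then 1 else 0 := by
  rw [gbc]
  have hd : diagram [] = ∅ := by simp [diagram]
  rw [hd]
  rcases eq_or_ne r 0 with rfl | h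
  · simp
  · rw [if_neg h]
    rw [Finset.powersetCard_eq_empty.2 (by simp; omega)]
    simp

def sh : ℕ × ℕ → ℕ × ℕ := fun c => (c.1 + 1, c.2)
def unsh : ℕ × ℕ → ℕ × ℕ := fun c => (c.1 - 1, c.2)

lemma diagram_cons (a : ℕ) (l : List ℕ) :
    diagram (a :: l) = ((Finset.range a).image fun j => (0, j)) ∪ (diagram l).image sh := by
  ext ⟨x, y⟩
  simp only [diagram, Finset.mem_biUnion, Finset.mem_union, Finset.mem_image, Finset.mem_range,
    List.length_cons, sh, Prod.mk.injEq, Prod.exists]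
  constructor
  · rintro ⟨i, hi, j, hj, hij1, hij2⟩
    rcases i with _ | i
    · left
      exact ⟨j, by simpa using hj, hij1, hij2⟩
    · right
      refine ⟨i, j, ⟨i, by omega, j, by simpa using hj, rfl, rfl⟩, by omega, hij2⟩
  · rintro (⟨j, hj, h1, h2⟩ | ⟨i, j, ⟨i', hi', j', hj', rfl, rfl⟩, h1, h2⟩)
    · exact ⟨0, by omega, j, by simpa using hj, h1, h2⟩
    · exact ⟨i'+1, by omega, j', by simpa using hj', by omega, h2⟩

lemma sh_unsh {c : ℕ × ℕ} (h : 1 ≤ c.1) : sh (unsh c) = c := by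
  rcases c with ⟨x, y⟩
  simp only [sh, unsh]
  congr 1
  omega

lemma unsh_sh (c : ℕ × ℕ) : unsh (sh c) = c := by
  rcases c with ⟨x, y⟩
  simp [sh, unsh]

lemma gbc_cons (a : ℕ) (l : List ℕ) (r : ℕ) :
    gbc (a :: l) r = ∑ x ∈ Finset.HasAntidiagonal.antidiagonal r,
      (if x.1 = 0 then 0 else a.choose x.1) * gbc l x.2 := by
  classical
  set len := l.length with hlen
  set row0 : Finset (ℕ × ℕ) := (Finset.range a).image (fun j => (0, j)) with hrow0
  set D : Finset (ℕ × ℕ) := diagram l with hD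
  set Dsh : Finset (ℕ × ℕ) := D.image sh with hDsh
  have hrow0_fst : ∀ c ∈ row0, c.1 = 0 := by
    intro c hc
    simp only [hrow0, Finset.mem_image, Finset.mem_range] at hc
    obtain ⟨j, _, rfl⟩ := hc
    rfl
  have hDsh_fst : ∀ c ∈ Dsh, 1 ≤ c.1 := by
    intro c hc
    simp only [hDsh, Finset.mem_image] at hc
    obtain ⟨d, _, rfl⟩ := hc
    simp [sh]
  have hrow0_card : row0.card = a := by
    rw [hrow0, Finset.card_image_of_injective _ (fun x y hxy => by simpa using hxy),
      Finset.card_range]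
  set P : Finset (ℕ × ℕ) → Prop := fun S => ∀ i ∈ Finset.range (len+1), ∃ c ∈ S, c.1 = i with hP
  set P' : Finset (ℕ × ℕ) → Prop := fun S => ∀ i ∈ Finset.range len, ∃ c ∈ S, c.1 = i with hP'
  set Big : Finset (Finset (ℕ × ℕ)) :=
    ((row0 ∪ Dsh).powersetCard r).filter P with hBig
  have hgbc : gbc (a :: l) r = Big.card := by
    rw [gbc, diagram_cons]
    rfl
  set key : Finset (ℕ × ℕ) → ℕ × ℕ := fun S => ((S ∩ row0).card, (S \ row0).card) with hkey
  have hkey_mem : ∀ S ∈ Big, key S ∈ Finset.HasAntidiagonal.antidiagonal r := by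
    intro S hS
    rw [hBig, Finset.mem_filter, Finset.mem_powersetCard] at hS
    rw [Finset.HasAntidiagonal.mem_antidiagonal, hkey]
    simp only
    rw [Finset.card_inter_add_card_sdiff]
    exact hS.1.2
  rw [hgbc, Finset.card_eq_sum_card_fiberwise hkey_mem]
  apply Finset.sum_congr rfl
  rintro ⟨j, k⟩ hx
  rw [Finset.HasAntidiagonal.mem_antidiagonal] at hx
  rcases eq_or_ne j 0 with rfl | hj
  · -- empty fiber
    rw [if_pos rfl, zero_mul, Finset.card_eq_zero, Finset.filter_eq_empty_iff]
    intro S hS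
    rw [hBig, Finset.mem_filter, Finset.mem_powersetCard] at hS
    obtain ⟨⟨hsub, hcard⟩, hPS⟩ := hS
    obtain ⟨c, hcS, hc0⟩ := hPS 0 (by simp)
    have hcrow : c ∈ row0 := by
      rcases Finset.mem_union.1 (hsub hcS) with h | h
      · exact h
      · exact absurd (hDsh_fst c h) (by omega)
    intro hkeyS
    have : c ∈ S ∩ row0 := Finset.mem_inter.2 ⟨hcS, hcrow⟩
    have hpos : 0 < (S ∩ row0).card := Finset.card_pos.2 ⟨c, this⟩
    have : (S ∩ row0).card = 0 := congrArg Prod.fst hkeyS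
    omega
  · rw [if_neg hj]
    have target_card : ((row0.powersetCard j) ×ˢ ((D.powersetCard k).filter P')).card
        = a.choose j * gbc l k := by
      rw [Finset.card_product, Finset.card_powersetCard, hrow0_card, gbc]
    rw [← target_card]
    apply Finset.card_bij'
      (i := fun S hS => (S ∩ row0, (S \ row0).image unsh))
      (j := fun q hq => q.1 ∪ q.2.image sh)
    -- maps into target
    · intro S hS
      rw [Finset.mem_filter] at hS
      obtain ⟨hSB, hkeyS⟩ := hS
      rw [hBig, Finset.mem_filter, Finset.mem_powersetCard] at hSB
      obtain ⟨⟨hsub, hcard⟩, hPS⟩ := hSB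
      have hj' : (S ∩ row0).card = j := congrArg Prod.fst hkeyS
      have hk' : (S \ row0).card = k := congrArg Prod.snd hkeyS
      have hsdiff_sub : S \ row0 ⊆ Dsh := by
        intro c hc
        rw [Finset.mem_sdiff] at hc
        rcases Finset.mem_union.1 (hsub hc.1) with h | h
        · exact absurd h hc.2
        · exact h
      rw [Finset.mem_product]
      constructor
      · rw [Finset.mem_powersetCard]
        exact ⟨Finset.inter_subset_right, hj'⟩
      · rw [Finset.mem_filter, Finset.mem_powersetCard]
        refine ⟨⟨?_, ?_⟩, ?_⟩
        · intro c hc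
          rw [Finset.mem_image] at hc
          obtain ⟨d, hd, rfl⟩ := hc
          have hdD : d ∈ Dsh := hsdiff_sub hd
          rw [hDsh, Finset.mem_image] at hdD
          obtain ⟨e, heD, rfl⟩ := hdD
          rw [unsh_sh]
          exact heD
        · rw [Finset.card_image_of_injOn, hk']
          intro c hc d hd hcd
          have h1 : sh (unsh c) = c := sh_unsh (hDsh_fst c (hsdiff_sub hc))
          have h2 : sh (unsh d) = d := sh_unsh (hDsh_fst d (hsdiff_sub hd))
          rw [← h1, ← h2, hcd]
        · intro i hi
          rw [Finset.mem_range] at hi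
          obtain ⟨c, hcS, hc1⟩ := hPS (i+1) (by simp; omega)
          have hcd : c ∈ S \ row0 := by
            rw [Finset.mem_sdiff]
            refine ⟨hcS, fun hc => ?_⟩
            have := hrow0_fst c hc
            omega
          refine ⟨unsh c, Finset.mem_image_of_mem _ hcd, ?_⟩
          simp only [unsh]
          omega
    -- backward maps into fiber
    · rintro ⟨S0, S1⟩ hq
      rw [Finset.mem_product, Finset.mem_powersetCard, Finset.mem_filter,
        Finset.mem_powersetCard] at hq
      obtain ⟨⟨hS0sub, hS0card⟩, ⟨⟨hS1sub, hS1card⟩, hPS1⟩⟩ := hq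
      have him_sub : S1.image sh ⊆ Dsh := by
        rw [hDsh]
        exact Finset.image_subset_image hS1sub
      have hdisj : Disjoint S0 (S1.image sh) := by
        rw [Finset.disjoint_left]
        intro c hc0 hcim
        have h0 := hrow0_fst c (hS0sub hc0)
        have h1 := hDsh_fst c (him_sub hcim)
        omega
      have hinter : (S0 ∪ S1.image sh) ∩ row0 = S0 := by
        apply Finset.Subset.antisymm
        · intro c hc
          rw [Finset.mem_inter, Finset.mem_union] at hc
          rcases hc.1 with h | h
          · exact h
          · exact absurd (hDsh_fst c (him_sub h)) (by have := hrow0_fst c hc.2; omega)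
        · intro c hc
          exact Finset.mem_inter.2 ⟨Finset.mem_union_left _ hc, hS0sub hc⟩
      have hsdiffq : (S0 ∪ S1.image sh) \ row0 = S1.image sh := by
        apply Finset.Subset.antisymm
        · intro c hc
          rw [Finset.mem_sdiff, Finset.mem_union] at hc
          rcases hc.1 with h | h
          · exact absurd (hS0sub h) hc.2
          · exact h
        · intro c hc
          rw [Finset.mem_sdiff]
          refine ⟨Finset.mem_union_right _ hc, fun hcr => ?_⟩
          have := hrow0_fst c hcr
          have := hDsh_fst c (him_sub hc)
          omega
      have hcardim : (S1.image sh).card = k := by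
        rw [Finset.card_image_of_injective _ (fun c d hcd => by
          rw [← unsh_sh c, ← unsh_sh d, hcd]), hS1card]
      rw [Finset.mem_filter]
      constructor
      · rw [hBig, Finset.mem_filter, Finset.mem_powersetCard]
        refine ⟨⟨?_, ?_⟩, ?_⟩
        · apply Finset.union_subset
          · exact hS0sub.trans Finset.subset_union_left
          · exact (Finset.image_subset_image hS1sub).trans Finset.subset_union_right
        · rw [Finset.card_union_of_disjoint hdisj, hS0card, hcardim, hx]
        · intro i hi
          rw [Finset.mem_range] at hi
          rcases Nat.eq_zero_or_pos i with rfl | hipos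
          · have : S0.Nonempty := by
              rw [← Finset.card_pos, hS0card]
              omega
            obtain ⟨c, hc⟩ := this
            exact ⟨c, Finset.mem_union_left _ hc, hrow0_fst c (hS0sub hc)⟩
          · obtain ⟨i', rfl⟩ : ∃ i', i = i' + 1 := ⟨i - 1, by omega⟩
            obtain ⟨c, hcS1, hc1⟩ := hPS1 i' (by rw [Finset.mem_range]; omega)
            refine ⟨sh c, Finset.mem_union_right _ (Finset.mem_image_of_mem _ hcS1), ?_⟩
            simp only [sh]
            omega
      · rw [hkey]
        simp only
        rw [hinter, hsdiffq, hS0card, hcardim]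
    -- left inverse
    · intro S hS
      rw [Finset.mem_filter] at hS
      obtain ⟨hSB, hkeyS⟩ := hS
      rw [hBig, Finset.mem_filter, Finset.mem_powersetCard] at hSB
      obtain ⟨⟨hsub, hcard⟩, hPS⟩ := hSB
      have hsdiff_sub : S \ row0 ⊆ Dsh := by
        intro c hc
        rw [Finset.mem_sdiff] at hc
        rcases Finset.mem_union.1 (hsub hc.1) with h | h
        · exact absurd h hc.2
        · exact h
      have him : ((S \ row0).image unsh).image sh = S \ row0 := by
        rw [Finset.image_image]
        apply Finset.image_congr (g := id) ?_ |>.trans (Finset.image_id)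
        intro c hc
        exact sh_unsh (hDsh_fst c (hsdiff_sub hc))
      simp only
      rw [him]
      ext c
      simp only [Finset.mem_union, Finset.mem_inter, Finset.mem_sdiff]
      tauto
    -- right inverse
    · rintro ⟨S0, S1⟩ hq
      rw [Finset.mem_product, Finset.mem_powersetCard, Finset.mem_filter,
        Finset.mem_powersetCard] at hq
      obtain ⟨⟨hS0sub, hS0card⟩, ⟨⟨hS1sub, hS1card⟩, hPS1⟩⟩ := hq
      have him_sub : S1.image sh ⊆ Dsh := by
        rw [hDsh]
        exact Finset.image_subset_image hS1sub
      have hinter : (S0 ∪ S1.image sh) ∩ row0 = S0 := by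
        apply Finset.Subset.antisymm
        · intro c hc
          rw [Finset.mem_inter, Finset.mem_union] at hc
          rcases hc.1 with h | h
          · exact h
          · exact absurd (hDsh_fst c (him_sub h)) (by have := hrow0_fst c hc.2; omega)
        · intro c hc
          exact Finset.mem_inter.2 ⟨Finset.mem_union_left _ hc, hS0sub hc⟩
      have hsdiffq : (S0 ∪ S1.image sh) \ row0 = S1.image sh := by
        apply Finset.Subset.antisymm
        · intro c hc
          rw [Finset.mem_sdiff, Finset.mem_union] at hc
          rcases hc.1 with h | h
          · exact absurd (hS0sub h) hc.2
          · exact h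
        · intro c hc
          rw [Finset.mem_sdiff]
          refine ⟨Finset.mem_union_right _ hc, fun hcr => ?_⟩
          have := hrow0_fst c hcr
          have := hDsh_fst c (him_sub hc)
          omega
      simp only
      rw [hinter, hsdiffq, Finset.image_image]
      have : S1.image (unsh ∘ sh) = S1 := by
        apply Finset.image_congr (g := id) ?_ |>.trans (Finset.image_id)
        intro c hc
        exact unsh_sh c
      rw [this]

lemma mcoe_nil : ((↑([] : List ℕ)) : Multiset ℕ) = 0 := rfl

lemma gbc_eq_gc (l : List ℕ) : ∀ r : ℕ, (gbc l r : ℚ) = gc (↑l) r := by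
  induction l with
  | nil =>
    intro r
    rw [gbc_nil, mcoe_nil, gc_zero]
    rcases eq_or_ne r 0 with rfl | h
    · simp
    · simp [h]
  | cons a l ih =>
    intro r
    rw [gbc_cons]
    have hcoe : ((↑(a :: l) : Multiset ℕ)) = a ::ₘ (↑l : Multiset ℕ) := rfl
    rw [hcoe, gc_cons, Nat.cast_sum]
    apply Finset.sum_congr rfl
    intro x _
    rw [Nat.cast_mul, ih x.2]
    congr 1
    rcases eq_or_ne x.1 0 with h | h
    · rw [if_pos h, if_pos h, Nat.cast_zero]
    · rw [if_neg h, if_neg h]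

lemma gbcP_eq {n : ℕ} (μ : n.Partition) (r : ℕ) : (gbcP μ r : ℚ) = gc μ.parts r := by
  rw [gbcP, gbc_eq_gc, Multiset.sort_eq]

lemma zMu_eq {n : ℕ} (μ : n.Partition) : ((zMu μ : ℕ) : ℚ) = zm μ.parts := by
  rw [zMu, zm, Nat.cast_prod]
  apply Finset.prod_congr rfl
  intro i _
  push_cast
  ring

noncomputable def Ff (X : ℚ) (r : ℕ) (p : Multiset ℕ) : ℚ :=
  (-1:ℚ)^(r + Multiset.card p) * gc p r * X^(Multiset.card p - 1) / zm p

lemma per_ins' (X : ℚ) (s i : ℕ) (hi : 1 ≤ i) (p : Multiset ℕ) (hp : ∀ a ∈ p, 0 < a) :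
    ((p.count i : ℚ) + 1) * Ff X s (i ::ₘ p)
      = (1 / (i:ℚ)) * ∑ j ∈ Finset.Icc 1 s, (-1:ℚ)^(j-1) * (i.choose j : ℚ) * trm X (s-j) p := by
  have hz : zm p ≠ 0 := zm_ne_zero p hp
  have hiq : (i:ℚ) ≠ 0 := Nat.cast_ne_zero.2 (by omega)
  have hc1 : ((p.count i : ℚ) + 1) ≠ 0 := by positivity
  have hR : (1 / (i:ℚ)) * ∑ j ∈ Finset.Icc 1 s, (-1:ℚ)^(j-1) * (i.choose j : ℚ) * trm X (s-j) p
      = ((-1:ℚ)^(s + Multiset.card p + 1) * X^(Multiset.card p) / ((i:ℚ) * zm p))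
          * ∑ j ∈ Finset.Icc 1 s, (i.choose j : ℚ) * gc p (s-j) := by
    rw [Finset.mul_sum, Finset.mul_sum]
    apply Finset.sum_congr rfl
    intro j hj
    simp only [Finset.mem_Icc] at hj
    rw [trm, sgn2 s (Multiset.card p) j hj.1 hj.2]
    field_simp
  rw [hR, Ff, Multiset.card_cons, zm_cons, gc_cons_icc]
  rw [show s + (Multiset.card p + 1) = s + Multiset.card p + 1 from by omega,
    show Multiset.card p + 1 - 1 = Multiset.card p from by omega]
  generalize (∑ j ∈ Finset.Icc 1 s, (i.choose j : ℚ) * gc p (s-j)) = S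
  field_simp

theorem stmt15 (n r : ℕ) (hn : 1 ≤ n) (hr : 1 ≤ r) (X z : ℚ) :
    ∑ μ : n.Partition, (-1 : ℚ) ^ (r - μ.parts.card) * (gbcP μ r : ℚ) / zMu μ
        * X ^ (μ.parts.card - 1) * (μ.parts.map fun a => z ^ (a - 1)).sum
      = ∑ j ∈ Finset.Icc 1 r, ∑ i ∈ Finset.Icc j (n + j - r),
          (-1 : ℚ) ^ (j - 1) * cb X (r - j) * (1 / i) * (i.choose j : ℚ)
            * binC ((n : ℤ) - i - 1) ((r : ℤ) - j - 1) * z ^ (i - 1) := by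
  classical
  have stepA : ∀ μ : n.Partition,
      (-1 : ℚ) ^ (r - μ.parts.card) * (gbcP μ r : ℚ) / zMu μ
        * X ^ (μ.parts.card - 1) * (μ.parts.map fun a => z ^ (a - 1)).sum
      = Ff X r μ.parts * (μ.parts.map fun a => z ^ (a - 1)).sum := by
    intro μ
    rw [gbcP_eq, zMu_eq, Ff]
    rcases eq_or_ne (gc μ.parts r) 0 with h0 | h0
    · rw [h0]; ring
    · have hcard : Multiset.card μ.parts ≤ r := by
        by_contra hc
        exact h0 (gc_vanish _ _ (by omega))
      rw [neg_one_pow_sub r (Multiset.card μ.parts) hcard, pow_add]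
      ring
  have stepC : ∀ i ∈ Finset.Icc 1 n,
      (fun a => z ^ (a-1)) i * ∑ μ' : (n-i).Partition,
          ((μ'.parts.count i : ℚ) + 1) * Ff X r (i ::ₘ μ'.parts)
      = ∑ j ∈ Finset.Icc 1 r,
          z ^ (i-1) * (1 / (i:ℚ)) * ((-1:ℚ)^(j-1) * (i.choose j : ℚ) * Tf X (n-i) (r-j)) := by
    intro i hi
    simp only [Finset.mem_Icc] at hi
    have inner : ∑ μ' : (n-i).Partition, ((μ'.parts.count i : ℚ) + 1) * Ff X r (i ::ₘ μ'.parts)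
        = ∑ μ' : (n-i).Partition, (1 / (i:ℚ)) *
            ∑ j ∈ Finset.Icc 1 r, (-1:ℚ)^(j-1) * (i.choose j : ℚ) * trm X (r-j) μ'.parts := by
      apply Finset.sum_congr rfl
      intro μ' _
      exact per_ins' X r i hi.1 μ'.parts (fun a ha => μ'.parts_pos ha)
    rw [inner, ← Finset.mul_sum, Finset.sum_comm]
    have hBp : ∀ j ∈ Finset.Icc 1 r,
        ∑ μ' : (n-i).Partition, (-1:ℚ)^(j-1) * (i.choose j : ℚ) * trm X (r-j) μ'.parts
          = (-1:ℚ)^(j-1) * (i.choose j : ℚ) * Tf X (n-i) (r-j) := by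
      intro j _
      rw [← Bp_eq_Tf, Bp, Finset.mul_sum]
    rw [Finset.sum_congr rfl hBp, Finset.mul_sum, Finset.mul_sum]
    apply Finset.sum_congr rfl
    intro j _
    ring
  calc ∑ μ : n.Partition, (-1 : ℚ) ^ (r - μ.parts.card) * (gbcP μ r : ℚ) / zMu μ
        * X ^ (μ.parts.card - 1) * (μ.parts.map fun a => z ^ (a - 1)).sum
      = ∑ μ : n.Partition, Ff X r μ.parts * (μ.parts.map fun a => z ^ (a - 1)).sum :=
        Finset.sum_congr rfl (fun μ _ => stepA μ)
    _ = ∑ i ∈ Finset.Icc 1 n, (fun a => z ^ (a-1)) i *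
          ∑ μ' : (n-i).Partition, ((μ'.parts.count i : ℚ) + 1) * Ff X r (i ::ₘ μ'.parts) :=
        sum_mark n hn (Ff X r) (fun a => z ^ (a-1))
    _ = ∑ i ∈ Finset.Icc 1 n, ∑ j ∈ Finset.Icc 1 r,
          z ^ (i-1) * (1 / (i:ℚ)) * ((-1:ℚ)^(j-1) * (i.choose j : ℚ) * Tf X (n-i) (r-j)) :=
        Finset.sum_congr rfl stepC
    _ = ∑ j ∈ Finset.Icc 1 r, ∑ i ∈ Finset.Icc 1 n,
          z ^ (i-1) * (1 / (i:ℚ)) * ((-1:ℚ)^(j-1) * (i.choose j : ℚ) * Tf X (n-i) (r-j)) :=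
        Finset.sum_comm
    _ = ∑ j ∈ Finset.Icc 1 r, ∑ i ∈ Finset.Icc j (n + j - r),
          (-1 : ℚ) ^ (j - 1) * cb X (r - j) * (1 / i) * (i.choose j : ℚ)
            * binC ((n : ℤ) - i - 1) ((r : ℤ) - j - 1) * z ^ (i - 1) := by
        apply Finset.sum_congr rfl
        intro j hj
        simp only [Finset.mem_Icc] at hj
        have hsub : Finset.Icc j (n + j - r) ⊆ Finset.Icc 1 n := by
          intro i hi
          simp only [Finset.mem_Icc] at hi ⊢
          omega
        have hvanish : ∀ i ∈ Finset.Icc 1 n, i ∉ Finset.Icc j (n + j - r) →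
            z ^ (i-1) * (1 / (i:ℚ)) * ((-1:ℚ)^(j-1) * (i.choose j : ℚ) * Tf X (n-i) (r-j)) = 0 := by
          intro i hi hni
          simp only [Finset.mem_Icc] at hi hni
          rcases Nat.lt_or_ge i j with hij | hij
          · rw [Nat.choose_eq_zero_of_lt hij, Nat.cast_zero]
            ring
          · have hbig : n + j - r < i := by omega
            have hTf : Tf X (n-i) (r-j) = 0 := by
              have hrj : 1 ≤ r - j := by omega
              rcases Nat.eq_zero_or_pos (n - i) with h0 | h0
              · rw [h0, Tf_m_zero, if_neg (by omega)]
              · rw [Tf_pos X (n-i) (r-j) h0 hrj,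
                  Nat.choose_eq_zero_of_lt (by omega), Nat.cast_zero, mul_zero]
            rw [hTf]
            ring
        rw [← Finset.sum_subset hsub hvanish]
        apply Finset.sum_congr rfl
        intro i hi
        simp only [Finset.mem_Icc] at hi
        have hin : i ≤ n := by omega
        have hTf : Tf X (n-i) (r-j) = cb X (r-j) * binC ((n : ℤ) - i - 1) ((r : ℤ) - j - 1) := by
          rw [Tf]
          congr 2
          · push_cast [Nat.cast_sub hin]
            ring
          · push_cast [Nat.cast_sub (show j ≤ r from by omega)]
            ring
        rw [hTf]
        ring
end

section
/- For a partition μ = λ ∪ {i} obtained by adding a part i to a partition λ, the generalized binomial coefficient satisfies ⟨μ, r⟩ = ∑_{j=1}^{i} C(i, j) ⟨λ, r-j⟩. -/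
open Finset

lemma mem_diagram {l : List ℕ} {c : ℕ × ℕ} :
    c ∈ diagram l ↔ c.1 < l.length ∧ c.2 < l.getD c.1 0 := by
  simp only [diagram, mem_biUnion, mem_range, mem_image]
  constructor
  · rintro ⟨a, ha, b, hb, rfl⟩; exact ⟨ha, hb⟩
  · rintro ⟨h1, h2⟩; exact ⟨c.1, h1, c.2, h2, rfl⟩

theorem stmt19 (l : List ℕ) (hpos : ∀ a ∈ l, 0 < a) (hsort : List.Pairwise (· ≥ ·) l)
    (i : ℕ) (hi : 1 ≤ i) (r : ℕ) (hr : 1 ≤ r) :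
    gbc (i :: l) r = ∑ j ∈ Finset.Icc 1 i, i.choose j * gbcZ l ((r : ℤ) - j) := by
  classical
  set m := l.length with hm
  set T := (((diagram (i :: l)).powersetCard r).filter
    (fun S => ∀ a ∈ Finset.range (i :: l).length, ∃ c ∈ S, c.1 = a)) with hT
  have memT : ∀ S, S ∈ T ↔ S ⊆ diagram (i :: l) ∧ S.card = r ∧
      ∀ a < m + 1, ∃ c ∈ S, c.1 = a := by
    intro S
    simp only [hT, mem_filter, mem_powersetCard, mem_range, List.length_cons, and_assoc, hm]
  have hrow0 : ∀ c ∈ diagram (i :: l), c.1 = 0 → c.2 < i := by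
    intro c hc h0
    have := mem_diagram.1 hc
    rw [h0] at this
    simpa using this.2
  have hrowS : ∀ c ∈ diagram (i :: l), c.1 ≠ 0 → (c.1 - 1, c.2) ∈ diagram l := by
    intro c hc h0
    have h := mem_diagram.1 hc
    obtain ⟨k, hk⟩ : ∃ k, c.1 = k + 1 := ⟨c.1 - 1, by omega⟩
    rw [mem_diagram]
    constructor
    · simp only [List.length_cons] at h; omega
    · have := h.2
      rw [hk, List.getD_cons_succ] at this
      simpa [hk] using this
  have key : ∀ j ∈ Finset.Icc 1 i,
      (T.filter (fun S => (S.filter (fun c => c.1 = 0)).card = j)).card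
        = i.choose j * gbcZ l ((r : ℤ) - j) := by
    intro j hj
    simp only [mem_Icc] at hj
    by_cases hjr : j ≤ r
    · -- main case
      have htoNat : ((r : ℤ) - j).toNat = r - j := by omega
      rw [gbcZ, if_pos (by omega), htoNat, gbc]
      set row0 := (Finset.range i).image (fun b => ((0 : ℕ), b)) with hrow0def
      set G := (((diagram l).powersetCard (r - j)).filter
        (fun S => ∀ a ∈ Finset.range l.length, ∃ c ∈ S, c.1 = a)) with hG
      have memG : ∀ S, S ∈ G ↔ S ⊆ diagram l ∧ S.card = r - j ∧
          ∀ a < m, ∃ c ∈ S, c.1 = a := by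
        intro S
        simp only [hG, mem_filter, mem_powersetCard, mem_range, and_assoc, hm]
      have hcard : ((row0.powersetCard j) ×ˢ G).card = i.choose j * G.card := by
        rw [card_product, card_powersetCard, hrow0def,
          card_image_of_injective _ (fun a b h => by simpa using h), card_range]
      rw [← hcard]
      apply Finset.card_nbij'
        (fun S => (S.filter (fun c => c.1 = 0),
          (S.filter (fun c => ¬ c.1 = 0)).image (fun c => (c.1 - 1, c.2))))
        (fun p => p.1 ∪ p.2.image (fun c => (c.1 + 1, c.2)))
      · -- forward maps to product
        intro S hS
        rw [mem_coe, mem_filter] at hS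
        obtain ⟨hS1, hj0⟩ := hS
        rw [memT] at hS1
        obtain ⟨hsub, hcardS, hcov⟩ := hS1
        rw [mem_coe, mem_product]
        constructor
        · rw [mem_powersetCard]
          refine ⟨?_, hj0⟩
          intro c hc
          rw [mem_filter] at hc
          rw [hrow0def, mem_image]
          exact ⟨c.2, mem_range.2 (hrow0 c (hsub hc.1) hc.2), by
            rw [← hc.2]⟩
        · rw [memG]
          have hinj : Set.InjOn (fun c : ℕ × ℕ => (c.1 - 1, c.2))
              ↑(S.filter (fun c => ¬ c.1 = 0)) := by
            intro a ha b hb hab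
            simp only [coe_filter, Set.mem_setOf_eq] at ha hb
            simp only [Prod.mk.injEq] at hab
            exact Prod.ext (by omega) hab.2
          refine ⟨?_, ?_, ?_⟩
          · intro c hc
            rw [mem_image] at hc
            obtain ⟨d, hd, rfl⟩ := hc
            rw [mem_filter] at hd
            exact hrowS d (hsub hd.1) hd.2
          · rw [card_image_of_injOn hinj]
            have := Finset.card_filter_add_card_filter_not
              (s := S) (p := fun c => c.1 = 0)
            omega
          · intro a ha
            obtain ⟨c, hc, hc1⟩ := hcov (a + 1) (by omega)
            refine ⟨(c.1 - 1, c.2), ?_, by simp [hc1]⟩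
            rw [mem_image]
            exact ⟨c, mem_filter.2 ⟨hc, by omega⟩, rfl⟩
      · -- backward maps to fiber
        intro p hp
        rw [mem_coe, mem_product] at hp
        obtain ⟨hp1, hp2⟩ := hp
        rw [mem_powersetCard] at hp1
        rw [memG] at hp2
        obtain ⟨hA, hAcard⟩ := hp1
        obtain ⟨hB, hBcard, hBcov⟩ := hp2
        have hAfst : ∀ c ∈ p.1, c.1 = 0 := by
          intro c hc
          have := hA hc
          rw [hrow0def, mem_image] at this
          obtain ⟨b, _, rfl⟩ := this; rfl
        have hAdiag : ∀ c ∈ p.1, c ∈ diagram (i :: l) := by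
          intro c hc
          have := hA hc
          rw [hrow0def, mem_image] at this
          obtain ⟨b, hb, rfl⟩ := this
          rw [mem_diagram]
          simpa using mem_range.1 hb
        have hdisj : Disjoint p.1 (p.2.image (fun c => (c.1 + 1, c.2))) := by
          rw [disjoint_left]
          intro c hc hc'
          rw [mem_image] at hc'
          obtain ⟨d, _, rfl⟩ := hc'
          have := hAfst _ hc
          simp at this
        have hfilter : (p.1 ∪ p.2.image (fun c => (c.1 + 1, c.2))).filter
            (fun c => c.1 = 0) = p.1 := by
          rw [filter_union]
          have h1 : p.1.filter (fun c => c.1 = 0) = p.1 :=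
            filter_eq_self.2 hAfst
          have h2 : (p.2.image (fun c => (c.1 + 1, c.2))).filter
              (fun c => c.1 = 0) = ∅ := by
            rw [filter_eq_empty_iff]
            intro c hc
            rw [mem_image] at hc
            obtain ⟨d, _, rfl⟩ := hc
            simp
          rw [h1, h2, union_empty]
        rw [mem_coe, mem_filter, memT]
        refine ⟨⟨?_, ?_, ?_⟩, by rw [hfilter, hAcard]⟩
        · intro c hc
          rw [mem_union] at hc
          rcases hc with hc | hc
          · exact hAdiag c hc
          · rw [mem_image] at hc
            obtain ⟨d, hd, rfl⟩ := hc
            have := mem_diagram.1 (hB hd)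
            rw [mem_diagram]
            refine ⟨by simpa using Nat.succ_lt_succ this.1, ?_⟩
            simpa using this.2
        · rw [card_union_of_disjoint hdisj,
            card_image_of_injective _ (fun a b h => by
              simp only [Prod.mk.injEq] at h; exact Prod.ext (by omega) h.2),
            hAcard, hBcard]
          omega
        · intro a ha
          rcases Nat.eq_zero_or_pos a with rfl | hapos
          · have : p.1.Nonempty := by
              rw [← card_pos, hAcard]; omega
            obtain ⟨c, hc⟩ := this
            exact ⟨c, mem_union_left _ hc, hAfst c hc⟩
          · obtain ⟨c, hc, hc1⟩ := hBcov (a - 1) (by omega)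
            refine ⟨(c.1 + 1, c.2), mem_union_right _ ?_, by simp [hc1]; omega⟩
            rw [mem_image]
            exact ⟨c, hc, rfl⟩
      · -- left inverse
        intro S hS
        rw [mem_coe, mem_filter] at hS
        obtain ⟨hS1, _⟩ := hS
        rw [memT] at hS1
        obtain ⟨hsub, _, _⟩ := hS1
        have himg : ((S.filter (fun c => ¬ c.1 = 0)).image
            (fun c => (c.1 - 1, c.2))).image (fun c => (c.1 + 1, c.2))
            = S.filter (fun c => ¬ c.1 = 0) := by
          rw [image_image]
          apply Finset.image_congr (g := id) ?_ |>.trans (image_id)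
          intro c hc
          simp only [coe_filter, Set.mem_setOf_eq] at hc
          simp only [Function.comp_apply, id_eq]
          exact Prod.ext (by omega) rfl
        simp only
        rw [himg, filter_union_filter_not_eq]
      · -- right inverse
        intro p hp
        rw [mem_coe, mem_product] at hp
        obtain ⟨hp1, hp2⟩ := hp
        rw [mem_powersetCard] at hp1
        rw [memG] at hp2
        have hAfst : ∀ c ∈ p.1, c.1 = 0 := by
          intro c hc
          have := hp1.1 hc
          rw [mem_image] at this
          obtain ⟨b, _, rfl⟩ := this; rfl
        have hfilter : (p.1 ∪ p.2.image (fun c => (c.1 + 1, c.2))).filter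
            (fun c => c.1 = 0) = p.1 := by
          rw [filter_union]
          have h1 : p.1.filter (fun c => c.1 = 0) = p.1 :=
            filter_eq_self.2 hAfst
          have h2 : (p.2.image (fun c => (c.1 + 1, c.2))).filter
              (fun c => c.1 = 0) = ∅ := by
            rw [filter_eq_empty_iff]
            intro c hc
            rw [mem_image] at hc
            obtain ⟨d, _, rfl⟩ := hc
            simp
          rw [h1, h2, union_empty]
        have hfilter2 : (p.1 ∪ p.2.image (fun c => (c.1 + 1, c.2))).filter
            (fun c => ¬ c.1 = 0) = p.2.image (fun c => (c.1 + 1, c.2)) := by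
          rw [filter_union]
          have h1 : p.1.filter (fun c => ¬ c.1 = 0) = ∅ := by
            rw [filter_eq_empty_iff]
            intro c hc
            simpa using hAfst c hc
          have h2 : (p.2.image (fun c => (c.1 + 1, c.2))).filter
              (fun c => ¬ c.1 = 0) = p.2.image (fun c => (c.1 + 1, c.2)) := by
            apply filter_eq_self.2
            intro c hc
            rw [mem_image] at hc
            obtain ⟨d, _, rfl⟩ := hc
            simp
          rw [h1, h2, empty_union]
        rw [Prod.ext_iff]
        refine ⟨?_, ?_⟩ <;> simp only
        · rw [hfilter]
        · rw [hfilter2, image_image]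
          apply Finset.image_congr (g := id) ?_ |>.trans (image_id)
          intro c _
          simp
    · -- degenerate case j > r
      have h1 : gbcZ l ((r : ℤ) - j) = 0 := by
        rw [gbcZ, if_neg (by omega)]
      rw [h1, Nat.mul_zero, card_eq_zero, eq_empty_iff_forall_notMem]
      intro S hS
      rw [mem_filter, memT] at hS
      obtain ⟨⟨_, hcardS, _⟩, hcontra⟩ := hS
      have := Finset.card_filter_le S (fun c => c.1 = 0)
      omega
  rw [gbc]
  rw [Finset.card_eq_sum_card_fiberwise
    (f := fun S => (S.filter (fun c => c.1 = 0)).card) (t := Finset.Icc 1 i) ?_]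
  · exact Finset.sum_congr rfl key
  · intro S hS
    rw [← hT] at hS
    rw [mem_coe, memT] at hS
    obtain ⟨hsub, hcardS, hcov⟩ := hS
    rw [mem_coe, mem_Icc]
    constructor
    · obtain ⟨c, hc, hc1⟩ := hcov 0 (by omega)
      have : c ∈ S.filter (fun c => c.1 = 0) := mem_filter.2 ⟨hc, hc1⟩
      have := card_pos.2 ⟨c, this⟩
      exact this
    · have hsub2 : S.filter (fun c => c.1 = 0) ⊆
          (Finset.range i).image (fun b => ((0 : ℕ), b)) := by
        intro c hc
        rw [mem_filter] at hc
        rw [mem_image]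
        exact ⟨c.2, mem_range.2 (hrow0 c (hsub hc.1) hc.2), by rw [← hc.2]⟩
      calc (S.filter (fun c => c.1 = 0)).card
          ≤ _ := card_le_card hsub2
        _ ≤ i := by
            rw [card_image_of_injective _ (fun a b h => by simpa using h), card_range]
end
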